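/- arXiv:1007.2534 — 8 statements merged into one kernel-verified Lean document; each statement's English description precedes it below -/
import Mathlib

section
/- The upper revised valuation v* (the eventual fixed point of iterating v ↦ v' starting from v) is the least valuation w such that v ≤ w and w' = w: if v ≤ w and w' = w, then v* ≤ w. -/
open Finset

structure Doctrine (L : Type) [DecidableEq L] (neg : L → L) where
  clauses : Finset (Finset L)
  two_le : ∀ C ∈ clauses, 2 ≤ C.card
  tnd : ∀ p : L, ({p, neg p} : Finset L) ∈ clauses

noncomputable def clauseMin {L : Type} [DecidableEq L] (neg : L → L) (v : L → ℝ) (p : L)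
    (C : Finset L) : ℝ :=
  if h : (C.erase p).Nonempty then (C.erase p).inf' h (fun q => v (neg q)) else 0

noncomputable def step {L : Type} [DecidableEq L] (neg : L → L) (D : Doctrine L neg)
    (v : L → ℝ) : L → ℝ := fun p =>
  (D.clauses.filter (fun C => p ∈ C)).sup'
    ⟨{p, neg p}, Finset.mem_filter.mpr ⟨D.tnd p, by simp⟩⟩
    (clauseMin neg v p)

theorem clauseMin_mono {L : Type} [DecidableEq L] (neg : L → L) (p : L) (C : Finset L) :
    Monotone fun v : L → ℝ => clauseMin neg v p C := by
  intro u w huw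
  unfold clauseMin
  split
  · exact le_inf' _ _ fun q hq => (inf'_le _ hq).trans (huw (neg q))
  · exact le_rfl

theorem step_mono {L : Type} [DecidableEq L] (neg : L → L) (D : Doctrine L neg) :
    Monotone (step neg D) := fun _ _ huw p =>
  sup'_le _ _ fun C hC => le_sup'_of_le _ hC (clauseMin_mono neg p C huw)

theorem upperRevised_least_general {L : Type} [DecidableEq L] (neg : L → L)
    (D : Doctrine L neg) (v vs : L → ℝ)
    (hvs : ∃ n : ℕ, vs = (step neg D)^[n] v) :
    ∀ w : L → ℝ, (∀ p, v p ≤ w p) → step neg D w = w → ∀ p, vs p ≤ w p := by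
  intro w hvw hwfix
  obtain ⟨n, rfl⟩ := hvs
  calc (step neg D)^[n] v ≤ (step neg D)^[n] w := (step_mono neg D).iterate n hvw
    _ = w := Function.iterate_fixed hwfix n

theorem upperRevised_least {L : Type} [Fintype L] [DecidableEq L] (neg : L → L)
    (hneg : ∀ p, neg (neg p) = p) (D : Doctrine L neg) (v vs : L → ℝ)
    (hv : ∀ p, 0 ≤ v p ∧ v p ≤ 1)
    (hvs : ∃ n : ℕ, vs = (step neg D)^[n] v)
    (hfix : step neg D vs = vs) :
    ∀ w : L → ℝ, (∀ p, v p ≤ w p) → step neg D w = w → ∀ p, vs p ≤ w p :=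
  upperRevised_least_general neg D v vs hvs
end

section
/- A truth assignment (a valuation u : Π → {0,1} with u_{¬p} = 1 − u_p) makes every clause of the doctrine true (each clause contains a literal with value 1) if and only if u' = u, where u' is the one-step revision transformation applied to u. -/
open Finset

theorem truthAssignment_consistent_iff_fixed {L : Type} [Fintype L] [DecidableEq L]
    (neg : L → L) (hneg : ∀ p, neg (neg p) = p) (D : Doctrine L neg) (u : L → ℝ)
    (hbool : ∀ p, u p = 0 ∨ u p = 1) (hbal : ∀ p, u (neg p) = 1 - u p) :
    (∀ C ∈ D.clauses, ∃ q ∈ C, u q = 1) ↔ step neg D u = u := by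
  have h01 : ∀ p, 0 ≤ u p ∧ u p ≤ 1 := by
    intro p; rcases hbool p with h | h <;> rw [h] <;> norm_num
  have hmin_nonneg : ∀ p C, 0 ≤ clauseMin neg u p C := by
    intro p C
    unfold clauseMin
    split
    · apply Finset.le_inf'
      intro r _
      exact (h01 (neg r)).1
    · exact le_refl 0
  constructor
  · intro hcon
    funext p
    rcases hbool p with h0 | h1
    · rw [h0]
      apply le_antisymm
      · apply Finset.sup'_le
        intro C hC
        rw [Finset.mem_filter] at hC
        obtain ⟨q, hq, hq1⟩ := hcon C hC.1
        have hqp : q ≠ p := by intro e; rw [e, h0] at hq1; norm_num at hq1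
        have hqm : q ∈ C.erase p := Finset.mem_erase.mpr ⟨hqp, hq⟩
        have hne : (C.erase p).Nonempty := ⟨q, hqm⟩
        rw [clauseMin, dif_pos hne]
        calc (C.erase p).inf' hne (fun r => u (neg r)) ≤ u (neg q) :=
              Finset.inf'_le _ hqm
        _ = 0 := by rw [hbal, hq1]; ring
      · exact le_trans (hmin_nonneg p _)
          (Finset.le_sup' _ (Finset.mem_filter.mpr ⟨D.tnd p, by simp⟩))
    · rw [h1]
      apply le_antisymm
      · apply Finset.sup'_le
        intro C hC
        rw [clauseMin]
        split
        · rename_i hne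
          obtain ⟨q, hq⟩ := hne
          exact le_trans (Finset.inf'_le _ hq) (h01 (neg q)).2
        · norm_num
      · have hnp : neg p ≠ p := by
          intro e
          have := hbal p
          rw [e, h1] at this
          norm_num at this
        have hmem : ({p, neg p} : Finset L) ∈ D.clauses.filter (fun C => p ∈ C) :=
          Finset.mem_filter.mpr ⟨D.tnd p, by simp⟩
        have hval : clauseMin neg u p ({p, neg p} : Finset L) = 1 := by
          have herase : ({p, neg p} : Finset L).erase p = {neg p} := by
            rw [Finset.erase_insert]
            simp [Ne.symm hnp]
          have hne : (({p, neg p} : Finset L).erase p).Nonempty := by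
            rw [herase]; exact ⟨neg p, by simp⟩
          rw [clauseMin, dif_pos hne]
          have : (({p, neg p} : Finset L).erase p).inf' hne (fun q => u (neg q))
              = ({neg p} : Finset L).inf' ⟨neg p, by simp⟩ (fun q => u (neg q)) := by
            congr 1
          rw [this, Finset.inf'_singleton, hneg, h1]
        calc (1 : ℝ) = clauseMin neg u p ({p, neg p} : Finset L) := hval.symm
        _ ≤ _ := Finset.le_sup' _ hmem
  · intro hfix C hC
    by_contra hno
    push_neg at hno
    have hall0 : ∀ q ∈ C, u q = 0 := fun q hq => (hbool q).resolve_right (hno q hq)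
    have hpos : 0 < C.card := lt_of_lt_of_le (by norm_num) (D.two_le C hC)
    obtain ⟨p, hp⟩ := Finset.card_pos.mp hpos
    have hup : u p = 0 := hall0 p hp
    obtain ⟨q, hq, hqp⟩ := Finset.exists_mem_ne
      (lt_of_lt_of_le (by norm_num) (D.two_le C hC)) p
    have hne : (C.erase p).Nonempty := ⟨q, Finset.mem_erase.mpr ⟨hqp, hq⟩⟩
    have hval : (1 : ℝ) ≤ clauseMin neg u p C := by
      rw [clauseMin, dif_pos hne]
      apply Finset.le_inf'
      intro r hr
      rw [hbal, hall0 r (Finset.mem_of_mem_erase hr)]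
      norm_num
    have hle : (1 : ℝ) ≤ step neg D u p := by
      refine le_trans hval (Finset.le_sup' _ ?_)
      exact Finset.mem_filter.mpr ⟨hC, hp⟩
    rw [hfix, hup] at hle
    norm_num at hle
end

section
/- If a valuation v satisfies v' = v (equivalently v_p ≥ min_{q ∈ C, q ≠ p} v_{¬q} for all clauses C ∋ p), then for every margin α ∈ [0,1] the associated decision of margin α is definitely consistent: for every clause C ∈ D and every p ∈ C, if every q ∈ C \ {p} is rejected (v_{¬q} − v_q > α), then p is accepted (v_p − v_{¬p} > α). -/
open Finset

/-! The literal `q` minimising `v (neg q)` over `C \ {p}` is rejected, so the fixed-point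
inequality at `q` forces `v q ≥ v (neg p)`; together with `v p ≥ v (neg q)`, the fixed-point
inequality at `p`, this gives `v p - v (neg p) ≥ v (neg q) - v q > α`. -/

section

variable {L : Type} [DecidableEq L] {neg : L → L}

theorem Doctrine.erase_nonempty (D : Doctrine L neg) {C : Finset L} (hC : C ∈ D.clauses)
    {p : L} (hp : p ∈ C) : (C.erase p).Nonempty := by
  rw [← Finset.card_pos, Finset.card_erase_of_mem hp]
  have := D.two_le C hC
  omega

theorem clauseMin_eq_inf' (v : L → ℝ) {p : L} {C : Finset L} (h : (C.erase p).Nonempty) :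
    clauseMin neg v p C = (C.erase p).inf' h (fun q => v (neg q)) :=
  dif_pos h

theorem exists_clauseMin_eq (v : L → ℝ) {p : L} {C : Finset L} (h : (C.erase p).Nonempty) :
    ∃ q ∈ C.erase p, clauseMin neg v p C = v (neg q) := by
  rw [clauseMin_eq_inf' v h]
  exact Finset.exists_mem_eq_inf' h _

/-- Passing from `C \ {p}` to `C \ {q}` for `q ∈ C \ {p}` adds only the literal `p`. -/
theorem min_le_clauseMin_of_mem_erase (v : L → ℝ) {p q : L} {C : Finset L} (hp : p ∈ C)
    (hq : q ∈ C.erase p) :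
    min (v (neg p)) (clauseMin neg v p C) ≤ clauseMin neg v q C := by
  have hsub : C.erase q ⊆ insert p (C.erase p) := fun r hr => by
    rcases eq_or_ne r p with rfl | hrp
    · exact Finset.mem_insert_self r _
    · exact Finset.mem_insert_of_mem (Finset.mem_erase.mpr ⟨hrp, Finset.mem_of_mem_erase hr⟩)
  have hq' : (C.erase q).Nonempty :=
    ⟨p, Finset.mem_erase.mpr ⟨(Finset.ne_of_mem_erase hq).symm, hp⟩⟩
  rw [clauseMin_eq_inf' v ⟨q, hq⟩, clauseMin_eq_inf' v hq']
  calc min (v (neg p)) ((C.erase p).inf' ⟨q, hq⟩ fun r => v (neg r))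
      = (insert p (C.erase p)).inf' (Finset.insert_nonempty _ _) (fun r => v (neg r)) :=
        by rw [Finset.inf'_insert ⟨q, hq⟩]
    _ ≤ (C.erase q).inf' hq' (fun r => v (neg r)) := Finset.inf'_mono _ hsub hq'

theorem clauseMin_le_step (D : Doctrine L neg) (v : L → ℝ) {C : Finset L} (hC : C ∈ D.clauses)
    {p : L} (hp : p ∈ C) : clauseMin neg v p C ≤ step neg D v p :=
  Finset.le_sup' (clauseMin neg v p) (Finset.mem_filter.mpr ⟨hC, hp⟩)

end

theorem fixed_decision_definitelyConsistent_general {L : Type} [DecidableEq L]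
    (neg : L → L) (D : Doctrine L neg) (v : L → ℝ)
    (hfix : step neg D v = v)
    (α : ℝ) (hα : 0 ≤ α ∧ α ≤ 1) :
    ∀ C ∈ D.clauses, ∀ p ∈ C,
      (∀ q ∈ C, q ≠ p → v (neg q) - v q > α) → v p - v (neg p) > α := by
  intro C hC p hp hrej
  have hfix_le : ∀ r ∈ C, clauseMin neg v r C ≤ v r := fun r hr =>
    (clauseMin_le_step D v hC hr).trans_eq (congrFun hfix r)
  obtain ⟨q, hq, hq_min⟩ := exists_clauseMin_eq v (D.erase_nonempty hC hp)
  have hq_rej := hrej q (Finset.mem_of_mem_erase hq) (Finset.ne_of_mem_erase hq)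
  have hp_ge : v (neg q) ≤ v p := hq_min ▸ hfix_le p hp
  have hq_ge_min : min (v (neg p)) (v (neg q)) ≤ v q :=
    hq_min ▸ (min_le_clauseMin_of_mem_erase v hp hq).trans
      (hfix_le q (Finset.mem_of_mem_erase hq))
  have hq_ge : v (neg p) ≤ v q := by
    rcases min_le_iff.mp hq_ge_min with h | h
    · exact h
    · linarith [hα.1]
  linarith

theorem fixed_decision_definitelyConsistent {L : Type} [Fintype L] [DecidableEq L]
    (neg : L → L) (hneg : ∀ p, neg (neg p) = p) (D : Doctrine L neg) (v : L → ℝ)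
    (hv : ∀ p, 0 ≤ v p ∧ v p ≤ 1) (hfix : step neg D v = v)
    (α : ℝ) (hα : 0 ≤ α ∧ α ≤ 1) :
    ∀ C ∈ D.clauses, ∀ p ∈ C,
      (∀ q ∈ C, q ≠ p → v (neg q) - v q > α) → v p - v (neg p) > α :=
  fixed_decision_definitelyConsistent_general neg D v hfix α hα
end

section
/- For any valuation v and any consistent truth assignment u (every clause contains a literal with u-value 1), the upper revised valuation v* satisfies max_{p : u_p = 1} v*_{¬p} ≤ max_{q : u_q = 1} v_{¬q}. -/
open Finset

/-! A set `T` of literals that meets every clause and contains no complementary pair bounds the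
revision: every clause `C ∋ ¬p` with `p ∈ T` contains some `q ∈ T`, necessarily `q ≠ ¬p`, so the
minimum over `C \ {¬p}` is at most `v (¬q)`. Hence the bound `v (¬q) ≤ M` for all `q ∈ T` survives
each application of `step`, hence for every iterate. -/

section Revision

variable {L : Type} [DecidableEq L] {neg : L → L}

theorem clauseMin_le_of_mem_erase (v : L → ℝ) {p q : L} {C : Finset L} (hq : q ∈ C.erase p) :
    clauseMin neg v p C ≤ v (neg q) := by
  rw [clauseMin, dif_pos ⟨q, hq⟩]
  exact inf'_le _ hq

variable (D : Doctrine L neg) {T : Set L} {M : ℝ}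
  (hmeet : ∀ C ∈ D.clauses, ∃ q ∈ C, q ∈ T) (hcompl : ∀ p ∈ T, neg p ∉ T)
include hmeet hcompl

theorem step_apply_neg_le {v : L → ℝ} (hM : ∀ q ∈ T, v (neg q) ≤ M) {p : L} (hp : p ∈ T) :
    step neg D v (neg p) ≤ M := by
  refine sup'_le _ _ fun C hC => ?_
  obtain ⟨hCD, -⟩ := mem_filter.mp hC
  obtain ⟨q, hqC, hqT⟩ := hmeet C hCD
  have hq : q ≠ neg p := fun h => hcompl p hp (h ▸ hqT)
  exact (clauseMin_le_of_mem_erase v (mem_erase.mpr ⟨hq, hqC⟩)).trans (hM q hqT)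

theorem iterate_step_apply_neg_le {v : L → ℝ} (hM : ∀ q ∈ T, v (neg q) ≤ M) (n : ℕ) :
    ∀ p ∈ T, (step neg D)^[n] v (neg p) ≤ M := by
  induction n with
  | zero => exact hM
  | succ n ih =>
    intro p hp
    rw [Function.iterate_succ_apply']
    exact step_apply_neg_le D hmeet hcompl ih hp

end Revision

theorem sSup_setOf_le_sSup_setOf {α : Type*} {P : α → Prop} {f g : α → ℝ}
    (h : ∀ p, P p → f p ≤ sSup {x | ∃ q, P q ∧ x = g q}) :
    sSup {x | ∃ p, P p ∧ x = f p} ≤ sSup {x | ∃ q, P q ∧ x = g q} := by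
  by_cases hP : ∃ p, P p
  · obtain ⟨p, hp⟩ := hP
    exact csSup_le ⟨f p, p, hp, rfl⟩ fun x ⟨p, hp, hx⟩ => hx ▸ h p hp
  -- with no witness both sets are empty, and `sSup ∅ = 0` on either side
  · have hempty : ∀ k : α → ℝ, {x | ∃ p, P p ∧ x = k p} = ∅ := fun k =>
      Set.eq_empty_of_forall_notMem fun x ⟨p, hp, _⟩ => hP ⟨p, hp⟩
    rw [hempty f, hempty g]

theorem upperRevised_consistent_bound_general {L : Type} [Fintype L] [DecidableEq L]
    (neg : L → L) (D : Doctrine L neg) (v vs : L → ℝ)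
    (hvs : ∃ n : ℕ, vs = (step neg D)^[n] v)
    (u : L → ℝ) (hbal : ∀ p, u (neg p) = 1 - u p)
    (hcons : ∀ C ∈ D.clauses, ∃ q ∈ C, u q = 1) :
    sSup {x : ℝ | ∃ p, u p = 1 ∧ x = vs (neg p)} ≤
      sSup {x : ℝ | ∃ q, u q = 1 ∧ x = v (neg q)} := by
  obtain ⟨n, rfl⟩ := hvs
  have hbdd : BddAbove {x : ℝ | ∃ q, u q = 1 ∧ x = v (neg q)} :=
    (Set.finite_range fun q => v (neg q)).bddAbove.mono <| by
      rintro _ ⟨q, -, rfl⟩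
      exact ⟨q, rfl⟩
  have hcompl : ∀ p ∈ {q | u q = 1}, neg p ∉ {q | u q = 1} := fun p hp hnp => by
    simp only [Set.mem_ofPred_eq, hbal] at hp hnp
    linarith
  exact sSup_setOf_le_sSup_setOf fun p hp =>
    iterate_step_apply_neg_le D hcons hcompl (fun q hq => le_csSup hbdd ⟨q, hq, rfl⟩) n p hp

theorem upperRevised_consistent_bound {L : Type} [Fintype L] [DecidableEq L]
    (neg : L → L) (hneg : ∀ p, neg (neg p) = p) (D : Doctrine L neg) (v vs : L → ℝ)
    (hv : ∀ p, 0 ≤ v p ∧ v p ≤ 1)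
    (hvs : ∃ n : ℕ, vs = (step neg D)^[n] v) (hfix : step neg D vs = vs)
    (u : L → ℝ) (hbool : ∀ p, u p = 0 ∨ u p = 1) (hbal : ∀ p, u (neg p) = 1 - u p)
    (hcons : ∀ C ∈ D.clauses, ∃ q ∈ C, u q = 1) :
    sSup {x : ℝ | ∃ p, u p = 1 ∧ x = vs (neg p)} ≤
      sSup {x : ℝ | ∃ q, u q = 1 ∧ x = v (neg q)} :=
  upperRevised_consistent_bound_general neg D v vs hvs u hbal hcons
end

section
/- If v is a convex combination v = Σ_k λ_k u^k (λ_k ≥ 0, Σ λ_k = 1) of definitely consistent partial truth assignments u^k, then for every literal p, v*_p = 1 implies v_p = 1, where v* is the upper revised valuation of v. -/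
/-!
Call `v` *one-closed* if every clause `C ∋ p` whose other literals all have negation valued `1`
forces `v p = 1`. For a partial truth assignment this is definite consistency, and since a convex
combination of valuations bounded by `1` takes the value `1` exactly where all the weighted
valuations do, one-closedness passes to `v`. The revision step can only produce the value `1` at
`p` from such a clause, so by induction every literal valued `1` by an iterate of the step was
already valued `1` by `v`.
-/

open Finset

theorem Finset.sum_mul_le_one {ι : Type*} (s : Finset ι) {lam x : ι → ℝ}
    (hlam : ∀ k ∈ s, 0 ≤ lam k) (hsum : ∑ k ∈ s, lam k = 1) (hx : ∀ k ∈ s, x k ≤ 1) :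
    ∑ k ∈ s, lam k * x k ≤ 1 :=
  calc ∑ k ∈ s, lam k * x k ≤ ∑ k ∈ s, lam k :=
        sum_le_sum fun k hk => mul_le_of_le_one_right (hlam k hk) (hx k hk)
    _ = 1 := hsum

theorem Finset.sum_mul_eq_one_iff {ι : Type*} (s : Finset ι) {lam x : ι → ℝ}
    (hlam : ∀ k ∈ s, 0 ≤ lam k) (hsum : ∑ k ∈ s, lam k = 1) (hx : ∀ k ∈ s, x k ≤ 1) :
    ∑ k ∈ s, lam k * x k = 1 ↔ ∀ k ∈ s, lam k ≠ 0 → x k = 1 := by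
  have hdefect : ∑ k ∈ s, lam k * (1 - x k) = 1 - ∑ k ∈ s, lam k * x k := by
    simp only [mul_sub, mul_one, sum_sub_distrib, hsum]
  have hnonneg : ∀ k ∈ s, 0 ≤ lam k * (1 - x k) :=
    fun k hk => mul_nonneg (hlam k hk) (sub_nonneg.mpr (hx k hk))
  calc ∑ k ∈ s, lam k * x k = 1 ↔ ∑ k ∈ s, lam k * (1 - x k) = 0 := by
        rw [hdefect, sub_eq_zero, eq_comm]
    _ ↔ ∀ k ∈ s, lam k * (1 - x k) = 0 := sum_eq_zero_iff_of_nonneg hnonneg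
    _ ↔ ∀ k ∈ s, lam k ≠ 0 → x k = 1 := forall₂_congr fun k _ => by
        rw [mul_eq_zero, sub_eq_zero, eq_comm (a := (1 : ℝ)), or_iff_not_imp_left]

namespace Doctrine

variable {L : Type} [DecidableEq L] {neg : L → L} (D : Doctrine L neg)

def IsOneClosed (v : L → ℝ) : Prop :=
  ∀ C ∈ D.clauses, ∀ p ∈ C, (∀ q ∈ C, q ≠ p → v (neg q) = 1) → v p = 1

theorem erase_nonempty_s10 {C : Finset L} (hC : C ∈ D.clauses) {p : L} (hp : p ∈ C) :
    (C.erase p).Nonempty := by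
  rw [← card_pos, card_erase_of_mem hp]
  have := D.two_le C hC
  omega

theorem clauseMin_eq_inf' (v : L → ℝ) {C : Finset L} (hC : C ∈ D.clauses) {p : L}
    (hp : p ∈ C) :
    clauseMin neg v p C = (C.erase p).inf' (D.erase_nonempty_s10 hC hp) (fun q => v (neg q)) :=
  dif_pos _

theorem step_le {w : L → ℝ} {c : ℝ} (hw : ∀ p, w p ≤ c) (p : L) : step neg D w p ≤ c := by
  refine sup'_le _ _ fun C hC => ?_
  obtain ⟨hCD, hpC⟩ := mem_filter.mp hC
  obtain ⟨q, hq⟩ := D.erase_nonempty_s10 hCD hpC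
  rw [D.clauseMin_eq_inf' w hCD hpC]
  exact (inf'_le _ hq).trans (hw (neg q))

theorem exists_clause_of_step_eq {w : L → ℝ} {c : ℝ} (hw : ∀ p, w p ≤ c) {p : L}
    (hp : step neg D w p = c) :
    ∃ C ∈ D.clauses, p ∈ C ∧ ∀ q ∈ C, q ≠ p → w (neg q) = c := by
  obtain ⟨C, hC, hCeq⟩ := exists_mem_eq_sup' (s := D.clauses.filter (fun C => p ∈ C))
    ⟨_, mem_filter.mpr ⟨D.tnd p, mem_insert_self p _⟩⟩ (clauseMin neg w p)
  obtain ⟨hCD, hpC⟩ := mem_filter.mp hC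
  have hmin : c ≤ (C.erase p).inf' (D.erase_nonempty_s10 hCD hpC) (fun q => w (neg q)) :=
    calc c = step neg D w p := hp.symm
      _ = clauseMin neg w p C := hCeq
      _ ≤ _ := (D.clauseMin_eq_inf' w hCD hpC).le
  exact ⟨C, hCD, hpC, fun q hq hqp =>
    (hw _).antisymm ((le_inf'_iff _ _).mp hmin q (mem_erase.mpr ⟨hqp, hq⟩))⟩

theorem iterate_step_le {v : L → ℝ} {c : ℝ} (hv : ∀ p, v p ≤ c) (n : ℕ) (p : L) :
    (step neg D)^[n] v p ≤ c := by
  induction n generalizing p with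
  | zero => exact hv p
  | succ n ih =>
    rw [Function.iterate_succ_apply']
    exact D.step_le ih p

theorem eq_one_of_iterate_step_eq_one {v : L → ℝ} (hv : ∀ p, v p ≤ 1) (hcl : D.IsOneClosed v)
    (n : ℕ) (p : L) (hp : (step neg D)^[n] v p = 1) : v p = 1 := by
  induction n generalizing p with
  | zero => exact hp
  | succ n ih =>
    rw [Function.iterate_succ_apply'] at hp
    obtain ⟨C, hC, hpC, hq⟩ := D.exists_clause_of_step_eq (D.iterate_step_le hv n) hp
    exact hcl C hC p hpC fun q hqC hqp => ih _ (hq q hqC hqp)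

end Doctrine

theorem aggregate_unanimity_converse_general {L : Type} [DecidableEq L]
    (neg : L → L) (D : Doctrine L neg)
    (K : ℕ) (u : Fin K → L → ℝ) (lam : Fin K → ℝ)
    (hlam : ∀ k, 0 ≤ lam k) (hsum : ∑ k, lam k = 1)
    (hpta : ∀ k, ∀ p, (u k p = 0 ∨ u k p = 1/2 ∨ u k p = 1) ∧ u k p + u k (neg p) = 1)
    (hdc : ∀ k, ∀ C ∈ D.clauses, ∀ p ∈ C, (∀ q ∈ C, q ≠ p → u k q = 0) → u k p = 1)
    (v vs : L → ℝ) (hv : ∀ p, v p = ∑ k, lam k * u k p)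
    (hvs : ∃ n : ℕ, vs = (step neg D)^[n] v) :
    ∀ p, vs p = 1 → v p = 1 := by
  have hu_le (k : Fin K) (p : L) : u k p ≤ 1 := by
    rcases (hpta k p).1 with h | h | h <;> rw [h] <;> norm_num
  have hv_le (p : L) : v p ≤ 1 :=
    hv p ▸ sum_mul_le_one univ (fun k _ => hlam k) hsum (fun k _ => hu_le k p)
  have hv_eq_one (p : L) : v p = 1 ↔ ∀ k, lam k ≠ 0 → u k p = 1 := by
    simpa [hv] using sum_mul_eq_one_iff univ (fun k _ => hlam k) hsum (fun k _ => hu_le k p)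
  have hcl : D.IsOneClosed v := fun C hC p hpC hnegq => (hv_eq_one p).2 fun k hk =>
    hdc k C hC p hpC fun q hqC hqp => by
      linarith [(hpta k q).2, (hv_eq_one (neg q)).1 (hnegq q hqC hqp) k hk]
  obtain ⟨n, rfl⟩ := hvs
  exact D.eq_one_of_iterate_step_eq_one hv_le hcl n

theorem aggregate_unanimity_converse {L : Type} [Fintype L] [DecidableEq L]
    (neg : L → L) (hneg : ∀ p, neg (neg p) = p) (D : Doctrine L neg)
    (K : ℕ) (u : Fin K → L → ℝ) (lam : Fin K → ℝ)
    (hlam : ∀ k, 0 ≤ lam k) (hsum : ∑ k, lam k = 1)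
    (hpta : ∀ k, ∀ p, (u k p = 0 ∨ u k p = 1/2 ∨ u k p = 1) ∧ u k p + u k (neg p) = 1)
    (hdc : ∀ k, ∀ C ∈ D.clauses, ∀ p ∈ C, (∀ q ∈ C, q ≠ p → u k q = 0) → u k p = 1)
    (v vs : L → ℝ) (hv : ∀ p, v p = ∑ k, lam k * u k p)
    (hvs : ∃ n : ℕ, vs = (step neg D)^[n] v) (hfix : step neg D vs = vs) :
    ∀ p, vs p = 1 → v p = 1 :=
  aggregate_unanimity_converse_general neg D K u lam hlam hsum hpta hdc v vs hv hvs
end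

section
/- (Respect for unanimity) If v is a convex combination of definitely consistent partial truth assignments and v_p = 1 for some literal p, then p is accepted by the basic decision associated with the upper revised valuation, i.e. v*_p > v*_{¬p}. -/
open Finset

/- Pick an individual `k` with positive weight `λ_k`. Unanimity forces `u_k p = 1`. The set
`S = {q | u_k q ≤ 1/2}` contains `¬p`, and definite consistency of `u_k` makes it closed under the
revision step: every clause through a literal of `S` has another literal `r` with `u_k r ≥ 1/2`, i.e.
`¬r ∈ S`. Since `v ≤ 1 - λ_k/2` on `S` initially, the same bound holds for all iterates, whereas
the tertium-non-datur clauses make the iteration inflationary, so `v*_p ≥ v_p = 1`. -/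

lemma sum_mul_le_one_sub_mul {ι : Type*} [Fintype ι] (lam x : ι → ℝ) (hlam : ∀ i, 0 ≤ lam i)
    (hsum : ∑ i, lam i = 1) (hx : ∀ i, x i ≤ 1) (k : ι) :
    ∑ i, lam i * x i ≤ 1 - lam k * (1 - x k) := by
  have hdefect : lam k * (1 - x k) ≤ ∑ i, lam i * (1 - x i) :=
    single_le_sum (f := fun i => lam i * (1 - x i))
      (fun i _ => mul_nonneg (hlam i) (sub_nonneg.mpr (hx i))) (mem_univ k)
  simp only [mul_sub, mul_one, sum_sub_distrib, hsum] at hdefect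
  linarith

def IsPartialTruthAssignment {L : Type} (neg : L → L) (u : L → ℝ) : Prop :=
  ∀ p, (u p = 0 ∨ u p = 1/2 ∨ u p = 1) ∧ u p + u (neg p) = 1

def IsDefinitelyConsistent {L : Type} [DecidableEq L] {neg : L → L} (D : Doctrine L neg)
    (u : L → ℝ) : Prop :=
  ∀ C ∈ D.clauses, ∀ p ∈ C, (∀ q ∈ C, q ≠ p → u q = 0) → u p = 1

def IsRevisionClosed {L : Type} [DecidableEq L] {neg : L → L} (D : Doctrine L neg)
    (S : Set L) : Prop :=
  ∀ q ∈ S, ∀ C ∈ D.clauses, q ∈ C → ∃ r ∈ C.erase q, neg r ∈ S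

namespace IsPartialTruthAssignment

variable {L : Type} {neg : L → L} {u : L → ℝ}

lemma le_one (hu : IsPartialTruthAssignment neg u) (p : L) : u p ≤ 1 := by
  rcases (hu p).1 with h | h | h <;> rw [h] <;> norm_num

lemma neg_le_half_of_ne_zero (hu : IsPartialTruthAssignment neg u) {p : L} (hp : u p ≠ 0) :
    u (neg p) ≤ 1/2 := by
  have hsum := (hu p).2
  rcases (hu p).1 with h | h | h
  · exact absurd h hp
  all_goals linarith

end IsPartialTruthAssignment

section

variable {L : Type} [DecidableEq L] {neg : L → L}

lemma IsDefinitelyConsistent.isRevisionClosed {D : Doctrine L neg} {u : L → ℝ}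
    (hu : IsPartialTruthAssignment neg u) (hdc : IsDefinitelyConsistent D u) :
    IsRevisionClosed D {q | u q ≤ 1/2} := by
  intro q (hq : u q ≤ 1/2) C hC hqC
  obtain ⟨r, hr, hr0⟩ : ∃ r ∈ C.erase q, u r ≠ 0 := by
    by_contra! h
    have := hdc C hC q hqC fun r hrC hrq => h r (mem_erase.mpr ⟨hrq, hrC⟩)
    linarith
  exact ⟨r, hr, hu.neg_le_half_of_ne_zero hr0⟩

lemma Doctrine.neg_ne (D : Doctrine L neg) (p : L) : neg p ≠ p := by
  intro h
  simpa [h] using D.two_le _ (D.tnd p)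

lemma clauseMin_le (w : L → ℝ) {p r : L} {C : Finset L} (hr : r ∈ C.erase p) :
    clauseMin neg w p C ≤ w (neg r) := by
  rw [clauseMin, dif_pos ⟨r, hr⟩]
  exact inf'_le _ hr

lemma clauseMin_pair (hneg : ∀ p, neg (neg p) = p) (D : Doctrine L neg) (w : L → ℝ) (p : L) :
    clauseMin neg w p {p, neg p} = w p := by
  have herase : ({p, neg p} : Finset L).erase p = {neg p} :=
    erase_insert (by simpa using (D.neg_ne p).symm)
  simp [clauseMin, herase, hneg]

lemma le_step (hneg : ∀ p, neg (neg p) = p) (D : Doctrine L neg) (w : L → ℝ) (p : L) :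
    w p ≤ step neg D w p := by
  rw [← clauseMin_pair hneg D w p]
  exact le_sup' (clauseMin neg w p) (mem_filter.mpr ⟨D.tnd p, by simp⟩)

lemma le_iterate_step (hneg : ∀ p, neg (neg p) = p) (D : Doctrine L neg) (w : L → ℝ) (p : L)
    (n : ℕ) : w p ≤ (step neg D)^[n] w p := by
  induction n with
  | zero => rfl
  | succ n ih =>
    rw [Function.iterate_succ_apply']
    exact ih.trans (le_step hneg D _ p)

variable {D : Doctrine L neg} {S : Set L} {c : ℝ} {w : L → ℝ}

lemma IsRevisionClosed.step_le (hS : IsRevisionClosed D S) (hw : ∀ q ∈ S, w q ≤ c) :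
    ∀ q ∈ S, step neg D w q ≤ c := by
  intro q hq
  refine sup'_le _ _ fun C hC => ?_
  obtain ⟨hCD, hqC⟩ := mem_filter.mp hC
  obtain ⟨r, hr, hrS⟩ := hS q hq C hCD hqC
  exact (clauseMin_le w hr).trans (hw _ hrS)

lemma IsRevisionClosed.iterate_step_le (hS : IsRevisionClosed D S) (hw : ∀ q ∈ S, w q ≤ c)
    (n : ℕ) : ∀ q ∈ S, (step neg D)^[n] w q ≤ c := by
  induction n with
  | zero => exact hw
  | succ n ih =>
    rw [Function.iterate_succ']
    exact hS.step_le ih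

end

theorem respect_unanimity_general {L : Type} [DecidableEq L]
    (neg : L → L) (hneg : ∀ p, neg (neg p) = p) (D : Doctrine L neg)
    (K : ℕ) (u : Fin K → L → ℝ) (lam : Fin K → ℝ)
    (hlam : ∀ k, 0 ≤ lam k) (hsum : ∑ k, lam k = 1)
    (hpta : ∀ k, ∀ p, (u k p = 0 ∨ u k p = 1/2 ∨ u k p = 1) ∧ u k p + u k (neg p) = 1)
    (hdc : ∀ k, ∀ C ∈ D.clauses, ∀ p ∈ C, (∀ q ∈ C, q ≠ p → u k q = 0) → u k p = 1)
    (v vs : L → ℝ) (hv : ∀ p, v p = ∑ k, lam k * u k p)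
    (hvs : ∃ n : ℕ, vs = (step neg D)^[n] v) :
    ∀ p, v p = 1 → vs p > vs (neg p) := by
  intro p hp
  obtain ⟨n, rfl⟩ := hvs
  obtain ⟨k, -, hk0⟩ := exists_ne_zero_of_sum_ne_zero (hsum ▸ one_ne_zero : ∑ k, lam k ≠ 0)
  have hk : 0 < lam k := (hlam k).lt_of_ne' hk0
  have hu : IsPartialTruthAssignment neg (u k) := hpta k
  have hdck : IsDefinitelyConsistent D (u k) := hdc k
  have hv_le (q : L) : v q ≤ 1 - lam k * (1 - u k q) :=
    hv q ▸ sum_mul_le_one_sub_mul lam (u · q) hlam hsum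
      (fun j => IsPartialTruthAssignment.le_one (hpta j) q) k
  have hup : u k p = 1 := by nlinarith [hv_le p, hu.le_one p]
  have hv_S (q : L) (hq : u k q ≤ 1/2) : v q ≤ 1 - lam k / 2 := by
    nlinarith [hv_le q]
  have hupper := (hdck.isRevisionClosed hu).iterate_step_le hv_S n (neg p)
    (by linarith [(hu p).2] : u k (neg p) ≤ 1/2)
  have hlower := le_iterate_step hneg D v p n
  linarith

theorem respect_unanimity {L : Type} [Fintype L] [DecidableEq L]
    (neg : L → L) (hneg : ∀ p, neg (neg p) = p) (D : Doctrine L neg)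
    (K : ℕ) (u : Fin K → L → ℝ) (lam : Fin K → ℝ)
    (hlam : ∀ k, 0 ≤ lam k) (hsum : ∑ k, lam k = 1)
    (hpta : ∀ k, ∀ p, (u k p = 0 ∨ u k p = 1/2 ∨ u k p = 1) ∧ u k p + u k (neg p) = 1)
    (hdc : ∀ k, ∀ C ∈ D.clauses, ∀ p ∈ C, (∀ q ∈ C, q ≠ p → u k q = 0) → u k p = 1)
    (v vs : L → ℝ) (hv : ∀ p, v p = ∑ k, lam k * u k p)
    (hvs : ∃ n : ℕ, vs = (step neg D)^[n] v) (hfix : step neg D vs = vs) :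
    ∀ p, v p = 1 → vs p > vs (neg p) :=
  respect_unanimity_general neg hneg D K u lam hlam hsum hpta hdc v vs hv hvs
end

section
/- Fix a literal p and keep v_q constant for all literals q ≠ p. Then, for any literal r, the upper revised value v*_r, viewed as a function of v_p ∈ [0,1], has the form: there exist a, b with 0 ≤ a ≤ b ≤ 1 such that v*_r = a for v_p ∈ [0,a], v*_r = v_p for v_p ∈ [a,b], and v*_r = b for v_p ∈ [b,1]. -/
open Finset

/-!
Each coordinate of every iterate of `step`, as a function of the value `x ∈ [0, 1]` put at `p`,
is a clamp `x ↦ max a (min b x)` with `0 ≤ a ≤ b ≤ 1`: this holds for the starting valuation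
(the identity at `p`, constants elsewhere), and clamps are closed under pointwise `min` and `max`,
which is all `step` applies. The fixed point `V x` agrees with one late enough iterate at `0`, `1`
and `x` at once, and a clamp is determined by its values at `0` and `1`, so `x ↦ V x r` is the
clamp with `a = V 0 r` and `b = V 1 r`.
-/

def IsUnitClamp (f : ℝ → ℝ) : Prop :=
  ∃ a b : ℝ, 0 ≤ a ∧ a ≤ b ∧ b ≤ 1 ∧ ∀ x ∈ Set.Icc (0 : ℝ) 1, f x = max a (min b x)

namespace IsUnitClamp

lemma const {c : ℝ} (h0 : 0 ≤ c) (h1 : c ≤ 1) : IsUnitClamp fun _ => c :=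
  ⟨c, c, h0, le_rfl, h1, fun x _ => by simp⟩

lemma id : IsUnitClamp fun x => x :=
  ⟨0, 1, le_rfl, zero_le_one, le_rfl, fun x hx => by simp [hx.1, hx.2]⟩

lemma sup {f g : ℝ → ℝ} (hf : IsUnitClamp f) (hg : IsUnitClamp g) : IsUnitClamp (f ⊔ g) := by
  obtain ⟨a, b, ha, hab, hb, hf⟩ := hf
  obtain ⟨c, d, hc, hcd, hd, hg⟩ := hg
  refine ⟨max a c, max b d, le_max_of_le_left ha, max_le_max hab hcd, max_le hb hd,
    fun x hx => ?_⟩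
  simp only [Pi.sup_apply, hf x hx, hg x hx, max_def, min_def]
  split_ifs <;> linarith

lemma inf {f g : ℝ → ℝ} (hf : IsUnitClamp f) (hg : IsUnitClamp g) : IsUnitClamp (f ⊓ g) := by
  obtain ⟨a, b, ha, hab, hb, hf⟩ := hf
  obtain ⟨c, d, hc, hcd, hd, hg⟩ := hg
  refine ⟨min a c, min b d, le_min ha hc, min_le_min hab hcd, min_le_of_left_le hb,
    fun x hx => ?_⟩
  simp only [Pi.inf_apply, hf x hx, hg x hx, max_def, min_def]
  split_ifs <;> linarith

lemma finset_sup' {ι : Type*} {s : Finset ι} (hs : s.Nonempty) {f : ι → ℝ → ℝ}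
    (hf : ∀ i ∈ s, IsUnitClamp (f i)) : IsUnitClamp fun x => s.sup' hs fun i => f i x := by
  simpa only [← Finset.sup'_apply] using Finset.sup'_induction hs f (fun _ h _ h' => h.sup h') hf

lemma finset_inf' {ι : Type*} {s : Finset ι} (hs : s.Nonempty) {f : ι → ℝ → ℝ}
    (hf : ∀ i ∈ s, IsUnitClamp (f i)) : IsUnitClamp fun x => s.inf' hs fun i => f i x := by
  simpa only [← Finset.inf'_apply] using Finset.inf'_induction hs f (fun _ h _ h' => h.inf h') hf

lemma eq_max_min_endpoints {f : ℝ → ℝ} (hf : IsUnitClamp f) :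
    0 ≤ f 0 ∧ f 0 ≤ f 1 ∧ f 1 ≤ 1 ∧ ∀ x ∈ Set.Icc (0 : ℝ) 1, f x = max (f 0) (min (f 1) x) := by
  obtain ⟨a, b, ha, hab, hb, hf⟩ := hf
  have h0 : f 0 = a := by simp [hf 0 (by simp), ha]
  have h1 : f 1 = b := by simp [hf 1 (by simp), hb, hab]
  rw [h0, h1]
  exact ⟨ha, hab, hb, hf⟩

lemma of_forall_exists_agree {g : ℝ → ℝ}
    (h : ∀ x ∈ Set.Icc (0 : ℝ) 1, ∃ f, IsUnitClamp f ∧ f 0 = g 0 ∧ f 1 = g 1 ∧ f x = g x) :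
    IsUnitClamp g := by
  obtain ⟨f, hf, h₀, h₁, -⟩ := h 0 (by simp)
  obtain ⟨ha, hab, hb, -⟩ := hf.eq_max_min_endpoints
  refine ⟨g 0, g 1, h₀ ▸ ha, h₀ ▸ h₁ ▸ hab, h₁ ▸ hb, fun x hx => ?_⟩
  obtain ⟨f, hf, h₀, h₁, hfx⟩ := h x hx
  rw [← h₀, ← h₁, ← hfx]
  exact hf.eq_max_min_endpoints.2.2.2 x hx

lemma piecewise {f : ℝ → ℝ} (hf : IsUnitClamp f) :
    ∃ a b : ℝ, 0 ≤ a ∧ a ≤ b ∧ b ≤ 1 ∧ ∀ x, 0 ≤ x → x ≤ 1 →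
      (x ≤ a → f x = a) ∧ (a ≤ x → x ≤ b → f x = x) ∧ (b ≤ x → f x = b) := by
  obtain ⟨a, b, ha, hab, hb, hf⟩ := hf
  refine ⟨a, b, ha, hab, hb, fun x hx₀ hx₁ => ?_⟩
  rw [hf x ⟨hx₀, hx₁⟩]
  exact ⟨fun h => by simp [h, h.trans hab], fun h h' => by simp [h, h'], fun h => by simp [h, hab]⟩

end IsUnitClamp

section Revision

variable {L : Type} [DecidableEq L] (neg : L → L) (D : Doctrine L neg)

lemma isUnitClamp_clauseMin {W : ℝ → L → ℝ} (hW : ∀ q, IsUnitClamp fun x => W x q)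
    (r : L) (C : Finset L) : IsUnitClamp fun x => clauseMin neg (W x) r C := by
  unfold clauseMin
  split
  · next hC => exact IsUnitClamp.finset_inf' hC fun q _ => hW (neg q)
  · exact IsUnitClamp.const le_rfl zero_le_one

lemma isUnitClamp_step {W : ℝ → L → ℝ} (hW : ∀ q, IsUnitClamp fun x => W x q) (r : L) :
    IsUnitClamp fun x => step neg D (W x) r :=
  IsUnitClamp.finset_sup' _ fun C _ => isUnitClamp_clauseMin neg hW r C

lemma isUnitClamp_iterate_update {v : L → ℝ} (hv : ∀ q, 0 ≤ v q ∧ v q ≤ 1) (p : L) (n : ℕ) :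
    ∀ q, IsUnitClamp fun x => (step neg D)^[n] (Function.update v p x) q := by
  induction n with
  | zero =>
    intro q
    rcases eq_or_ne q p with rfl | hq
    · simpa using IsUnitClamp.id
    · simpa [Function.update_of_ne hq] using IsUnitClamp.const (hv q).1 (hv q).2
  | succ n ih =>
    simpa only [Function.iterate_succ_apply'] using isUnitClamp_step neg D ih

end Revision

lemma Function.iterate_eq_of_le_of_fixed {α : Type*} {f : α → α} {u w : α} {n m : ℕ}
    (hw : w = f^[n] u) (hfix : f w = w) (hnm : n ≤ m) : w = f^[m] u := by
  obtain ⟨k, rfl⟩ := Nat.exists_eq_add_of_le' hnm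
  rw [Function.iterate_add_apply, ← hw, Function.iterate_fixed hfix]

theorem upperRevised_piecewise_general {L : Type} [DecidableEq L]
    (neg : L → L) (D : Doctrine L neg)
    (v : L → ℝ) (hv : ∀ q, 0 ≤ v q ∧ v q ≤ 1) (p : L)
    (V : ℝ → (L → ℝ))
    (hV : ∀ x, (∃ n : ℕ, V x = (step neg D)^[n] (Function.update v p x)) ∧
      step neg D (V x) = V x) :
    ∀ r : L, ∃ a b : ℝ, 0 ≤ a ∧ a ≤ b ∧ b ≤ 1 ∧
      ∀ x, 0 ≤ x → x ≤ 1 →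
        (x ≤ a → V x r = a) ∧ (a ≤ x → x ≤ b → V x r = x) ∧ (b ≤ x → V x r = b) := by
  intro r
  have hstable : ∀ x, ∃ n, ∀ m ≥ n, V x = (step neg D)^[m] (Function.update v p x) := fun x =>
    let ⟨n, hn⟩ := (hV x).1
    ⟨n, fun _ hm => Function.iterate_eq_of_le_of_fixed hn (hV x).2 hm⟩
  refine IsUnitClamp.piecewise (IsUnitClamp.of_forall_exists_agree fun x _ => ?_)
  obtain ⟨n₀, h₀⟩ := hstable 0
  obtain ⟨n₁, h₁⟩ := hstable 1
  obtain ⟨n, h⟩ := hstable x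
  let N := max (max n₀ n₁) n
  exact ⟨_, isUnitClamp_iterate_update neg D hv p N r, (congrFun (h₀ N (by omega)) r).symm,
    (congrFun (h₁ N (by omega)) r).symm, (congrFun (h N (by omega)) r).symm⟩

theorem upperRevised_piecewise {L : Type} [Fintype L] [DecidableEq L]
    (neg : L → L) (hneg : ∀ p, neg (neg p) = p) (D : Doctrine L neg)
    (v : L → ℝ) (hv : ∀ q, 0 ≤ v q ∧ v q ≤ 1) (p : L)
    (V : ℝ → (L → ℝ))
    (hV : ∀ x, (∃ n : ℕ, V x = (step neg D)^[n] (Function.update v p x)) ∧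
      step neg D (V x) = V x) :
    ∀ r : L, ∃ a b : ℝ, 0 ≤ a ∧ a ≤ b ∧ b ≤ 1 ∧
      ∀ x, 0 ≤ x → x ≤ 1 →
        (x ≤ a → V x r = a) ∧ (a ≤ x → x ≤ b → V x r = x) ∧ (b ≤ x → V x r = b) :=
  upperRevised_piecewise_general neg D v hv p V hV
end

section
/- (Definite Horn case) Suppose every clause C ∈ D that is not a tertium-non-datur clause contains exactly one positive literal (element of P). Then for every valuation v, the upper revised valuation satisfies max_{p ∈ P} v*_{¬p} ≤ max_{q ∈ P} v_{¬q}. -/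
/-! The bound only needs that every clause of the doctrine contains a positive literal: Horn clauses
by assumption, and `{p, ¬p}` because exactly one of `p`, `¬p` is positive. Then for a positive `p`
every clause through `¬p` offers a positive `t ≠ ¬p`, so one step of the revision gives
`v'_{¬p} ≤ v_{¬t} ≤ max_{q ∈ P} v_{¬q}`, and this bound is preserved along the iteration. -/

open Finset

section Revision

variable {L : Type} [DecidableEq L] {neg : L → L} {D : Doctrine L neg}

lemma clauseMin_le_of_mem {v : L → ℝ} {p t : L} {C : Finset L} (ht : t ∈ C) (htp : t ≠ p) :
    clauseMin neg v p C ≤ v (neg t) := by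
  have hmem : t ∈ C.erase p := mem_erase.2 ⟨htp, ht⟩
  rw [clauseMin, dif_pos ⟨t, hmem⟩]
  exact inf'_le _ hmem

lemma step_le_of_forall_clause {v : L → ℝ} {p : L} {M : ℝ}
    (h : ∀ C ∈ D.clauses, p ∈ C → ∃ t ∈ C, t ≠ p ∧ v (neg t) ≤ M) :
    step neg D v p ≤ M :=
  sup'_le _ _ fun C hC => by
    obtain ⟨hCD, hpC⟩ := mem_filter.1 hC
    obtain ⟨t, htC, htp, hle⟩ := h C hCD hpC
    exact (clauseMin_le_of_mem htC htp).trans hle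

lemma Doctrine.exists_mem_of_definiteHorn {Pos : Finset L} (hPos : ∀ p, p ∈ Pos ↔ neg p ∉ Pos)
    (hHorn : ∀ C ∈ D.clauses, (¬ ∃ p : L, C = {p, neg p}) → ∃! t, t ∈ C ∧ t ∈ Pos) :
    ∀ C ∈ D.clauses, ∃ t ∈ C, t ∈ Pos := by
  intro C hC
  by_cases htnd : ∃ p : L, C = {p, neg p}
  · obtain ⟨p, rfl⟩ := htnd
    by_cases hp : p ∈ Pos
    · exact ⟨p, by simp, hp⟩
    · exact ⟨neg p, by simp, not_not.1 (mt (hPos p).2 hp)⟩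
  · obtain ⟨t, ⟨htC, htP⟩, -⟩ := hHorn C hC htnd
    exact ⟨t, htC, htP⟩

variable {Pos : Finset L}

lemma step_le_of_notMem (hD : ∀ C ∈ D.clauses, ∃ t ∈ C, t ∈ Pos) {w : L → ℝ} {M : ℝ} (hb : ∀ q ∈ Pos, w (neg q) ≤ M) {l : L}
    (hl : l ∉ Pos) : step neg D w l ≤ M :=
  step_le_of_forall_clause fun C hC _ =>
    let ⟨t, htC, htP⟩ := hD C hC
    ⟨t, htC, ne_of_mem_of_not_mem htP hl, hb t htP⟩

lemma iterate_step_neg_le (hD : ∀ C ∈ D.clauses, ∃ t ∈ C, t ∈ Pos) (hPos : ∀ p ∈ Pos, neg p ∉ Pos) {v : L → ℝ} {M : ℝ}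
    (hb : ∀ q ∈ Pos, v (neg q) ≤ M) (n : ℕ) :
    ∀ p ∈ Pos, (step neg D)^[n] v (neg p) ≤ M := by
  induction n with
  | zero => exact hb
  | succ n ih =>
    intro p hp
    rw [Function.iterate_succ_apply']
    exact step_le_of_notMem hD ih (hPos p hp)

end Revision

section FinsetSup

variable {ι : Type*} (s : Finset ι)

lemma le_sSup_of_mem_finset (g : ι → ℝ) {q : ι} (hq : q ∈ s) :
    g q ≤ sSup {x : ℝ | ∃ q ∈ s, x = g q} := by
  refine le_csSup ?_ ⟨q, hq, rfl⟩
  refine ((s.finite_toSet.image g).subset ?_).bddAbove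
  rintro _ ⟨q, hq, rfl⟩
  exact ⟨q, hq, rfl⟩

lemma sSup_finset_le_sSup_finset {f g : ι → ℝ}
    (h : ∀ p ∈ s, f p ≤ sSup {x : ℝ | ∃ q ∈ s, x = g q}) :
    sSup {x : ℝ | ∃ p ∈ s, x = f p} ≤ sSup {x : ℝ | ∃ q ∈ s, x = g q} := by
  rcases s.eq_empty_or_nonempty with rfl | ⟨p, hp⟩
  · simp
  · refine csSup_le ⟨f p, p, hp, rfl⟩ ?_
    rintro _ ⟨p, hp, rfl⟩
    exact h p hp

end FinsetSup

theorem definiteHorn_bound_general {L : Type} [DecidableEq L]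
    (neg : L → L) (D : Doctrine L neg)
    (Pos : Finset L) (hPos : ∀ p, p ∈ Pos ↔ neg p ∉ Pos)
    (hHorn : ∀ C ∈ D.clauses, (¬ ∃ p : L, C = {p, neg p}) →
      ∃! t, t ∈ C ∧ t ∈ Pos)
    (v vs : L → ℝ)
    (hvs : ∃ n : ℕ, vs = (step neg D)^[n] v) :
    sSup {x : ℝ | ∃ p ∈ Pos, x = vs (neg p)} ≤
      sSup {x : ℝ | ∃ q ∈ Pos, x = v (neg q)} := by
  obtain ⟨n, rfl⟩ := hvs
  have hD := D.exists_mem_of_definiteHorn hPos hHorn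
  exact sSup_finset_le_sSup_finset Pos <|
    iterate_step_neg_le hD (fun p hp => (hPos p).1 hp)
      (fun q hq => le_sSup_of_mem_finset Pos (fun q => v (neg q)) hq) n

theorem definiteHorn_bound {L : Type} [Fintype L] [DecidableEq L]
    (neg : L → L) (hneg : ∀ p, neg (neg p) = p) (D : Doctrine L neg)
    (Pos : Finset L) (hPos : ∀ p, p ∈ Pos ↔ neg p ∉ Pos)
    (hHorn : ∀ C ∈ D.clauses, (¬ ∃ p : L, C = {p, neg p}) →
      ∃! t, t ∈ C ∧ t ∈ Pos)
    (v vs : L → ℝ) (hv : ∀ p, 0 ≤ v p ∧ v p ≤ 1)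
    (hvs : ∃ n : ℕ, vs = (step neg D)^[n] v) (hfix : step neg D vs = vs) :
    sSup {x : ℝ | ∃ p ∈ Pos, x = vs (neg p)} ≤
      sSup {x : ℝ | ∃ q ∈ Pos, x = v (neg q)} :=
  definiteHorn_bound_general neg D Pos hPos hHorn v vs hvs
end
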